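/- Let $0 < \alpha < n$ and $1 < p < q \le n/\alpha$. For every cube $Q$ and every $x \in \mathbb{R}^n$, $M_\alpha[|f|^p \mathbf{1}_Q](x) \le \|f\|_{\mathcal{M}^{q, n/\alpha}} \cdot \left( M[|f|^{(p-1)q'} \mathbf{1}_Q](x) \right)^{1/q'}$, where $q' = q/(q-1)$ and $M$ is the Hardy-Littlewood maximal operator. -/

import Mathlib

open MeasureTheory ENNReal

noncomputable section

/-- An axis-parallel cube in `ℝⁿ`, given by its corner and (positive) side length. -/
structure Cube (n : ℕ) where
  corner : Fin n → ℝ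
  side : ℝ
  side_pos : 0 < side

/-- The underlying set of a cube. -/
def Cube.set {n : ℕ} (Q : Cube n) : Set (Fin n → ℝ) :=
  Set.univ.pi fun i => Set.Ico (Q.corner i) (Q.corner i + Q.side)

/-- The Morrey norm `‖f‖_{M^{p,p₀}}`. -/
def morreyNorm {n : ℕ} (p p₀ : ℝ) (f : (Fin n → ℝ) → ℝ≥0∞) : ℝ≥0∞ :=
  ⨆ Q : Cube n, volume Q.set ^ (1 / p₀) *
    ((∫⁻ x in Q.set, f x ^ p) / volume Q.set) ^ (1 / p)

/-- The fractional maximal operator; `fracMax 0` is the Hardy-Littlewood maximal operator. -/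
def fracMax {n : ℕ} (α : ℝ) (g : (Fin n → ℝ) → ℝ≥0∞) (x : Fin n → ℝ) : ℝ≥0∞ :=
  ⨆ Q : Cube n, ⨆ _ : x ∈ Q.set, ENNReal.ofReal Q.side ^ (α - n) * ∫⁻ y in Q.set, g y

/-! For a cube `R ∋ x`, Hölder's inequality with exponents `q, q'` applied to
`|f|^p 1_Q = |f| · |f|^{p-1} 1_Q` on `R` bounds `ℓ_R^{α-n} ∫_R |f|^p 1_Q` by
`|R|^{α/n} (⨍_R |f|^q)^{1/q} · (|R|⁻¹ ∫_R |f|^{(p-1)q'} 1_Q)^{1/q'}`, using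
`ℓ_R^{α-n} = |R|^{α/n - 1} = |R|^{α/n} |R|^{-1/q} |R|^{-1/q'}`. The first factor is at most the
Morrey norm and the second at most `M[|f|^{(p-1)q'} 1_Q](x)^{1/q'}`. -/

lemma Cube.measurableSet {n : ℕ} (Q : Cube n) : MeasurableSet Q.set :=
  .univ_pi fun _ => measurableSet_Ico

lemma Cube.volume_set {n : ℕ} (Q : Cube n) :
    volume Q.set = ENNReal.ofReal Q.side ^ (n : ℝ) := by
  rw [Cube.set, volume_pi_pi]
  simp [Real.volume_Ico, ← ENNReal.rpow_natCast]

lemma Cube.ofReal_side_rpow_sub {n : ℕ} (Q : Cube n) (hn : (n : ℝ) ≠ 0) (β : ℝ) :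
    ENNReal.ofReal Q.side ^ (β - n) = volume Q.set ^ (β / n - 1) := by
  rw [Q.volume_set, ← ENNReal.rpow_mul]
  congr 1
  field_simp

section Holder

variable {X : Type*} [MeasurableSpace X] {μ : Measure X} {f : X → ℝ≥0∞} {p q r : ℝ}

theorem lintegral_rpow_le_holder (hf : AEMeasurable f μ) (hqr : q.HolderConjugate r)
    (hp : 1 ≤ p) :
    ∫⁻ x, f x ^ p ∂μ ≤
      (∫⁻ x, f x ^ q ∂μ) ^ (1 / q) * (∫⁻ x, f x ^ ((p - 1) * r) ∂μ) ^ (1 / r) := by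
  have hsplit : (fun x => f x ^ p) = f * fun x => f x ^ (p - 1) := by
    ext x
    conv_lhs => rw [← add_sub_cancel 1 p]
    rw [ENNReal.rpow_add_of_nonneg _ _ zero_le_one (sub_nonneg.2 hp), ENNReal.rpow_one]
    rfl
  rw [hsplit]
  simpa only [← ENNReal.rpow_mul] using
    ENNReal.lintegral_mul_le_Lp_mul_Lq μ hqr hf (hf.pow_const (p - 1))

theorem lintegral_indicator_rpow_le_holder (hf : AEMeasurable f μ) {S : Set X}
    (hS : MeasurableSet S) (hqr : q.HolderConjugate r) (hp : 1 < p) :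
    ∫⁻ x, S.indicator (f · ^ p) x ∂μ ≤
      (∫⁻ x, f x ^ q ∂μ) ^ (1 / q) *
        (∫⁻ x, S.indicator (f · ^ ((p - 1) * r)) x ∂μ) ^ (1 / r) := by
  have indicator_rpow {t : ℝ} (ht : 0 < t) : S.indicator (f · ^ t) = (S.indicator f · ^ t) := by
    funext x
    by_cases hx : x ∈ S <;> simp [hx, ENNReal.zero_rpow_of_pos ht]
  rw [indicator_rpow (by linarith),
    indicator_rpow (mul_pos (sub_pos.2 hp) hqr.symm.pos)]
  refine (lintegral_rpow_le_holder (hf.indicator hS) hqr hp.le).trans ?_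
  have := hqr.nonneg
  gcongr with x
  exact Set.indicator_le_self S f x

end Holder

theorem ENNReal.rpow_sub_one_mul_holder {V : ℝ≥0∞} (hV₀ : V ≠ 0) (hV : V ≠ ⊤) {q r : ℝ}
    (hqr : q.HolderConjugate r) (β : ℝ) (A B : ℝ≥0∞) :
    V ^ (β - 1) * (A ^ (1 / q) * B ^ (1 / r)) =
      V ^ β * (A / V) ^ (1 / q) * (V ^ (-1 : ℝ) * B) ^ (1 / r) := by
  have hsplit : β - 1 = β + -1 * (1 / q) + -1 * (1 / r) := by
    have := hqr.inv_add_inv_eq_one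
    rw [one_div, one_div]
    linarith
  rw [div_eq_mul_inv A V, ← ENNReal.rpow_neg_one V,
    ENNReal.mul_rpow_of_nonneg _ _ (one_div_nonneg.2 hqr.nonneg),
    ENNReal.mul_rpow_of_nonneg _ _ (one_div_nonneg.2 hqr.symm.nonneg),
    ← ENNReal.rpow_mul, ← ENNReal.rpow_mul, hsplit,
    ENNReal.rpow_add _ _ hV₀ hV, ENNReal.rpow_add _ _ hV₀ hV]
  ring

theorem fracMax_pointwise_bound_general (n : ℕ) (α p q : ℝ) (hα0 : 0 < α) (hαn : α < n)
    (hp : 1 < p) (hpq : p < q)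
    (f : (Fin n → ℝ) → ℝ≥0∞) (hf : Measurable f) (Q : Cube n) (x : Fin n → ℝ) :
    fracMax α (Q.set.indicator fun y => f y ^ p) x ≤
      morreyNorm q (n / α) f *
        fracMax 0 (Q.set.indicator fun y => f y ^ ((p - 1) * (q / (q - 1)))) x
          ^ ((q - 1) / q) := by
  set q' := q / (q - 1)
  have hqr : q.HolderConjugate q' := .conjExponent (hp.trans hpq)
  have hn : (n : ℝ) ≠ 0 := (hα0.trans hαn).ne'
  refine iSup₂_le fun R hx => ?_
  set V := volume R.set
  have hV₀ : V ≠ 0 := by simp [V, R.volume_set, R.side_pos]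
  have hV : V ≠ ⊤ := by simp [V, R.volume_set]
  set B := ∫⁻ y in R.set, Q.set.indicator (f · ^ ((p - 1) * q')) y
  have hfracMax : V ^ (-1 : ℝ) * B ≤ fracMax 0 (Q.set.indicator (f · ^ ((p - 1) * q'))) x := by
    refine le_iSup₂_of_le R hx (le_of_eq ?_)
    rw [R.ofReal_side_rpow_sub hn, zero_div, zero_sub]
  calc ENNReal.ofReal R.side ^ (α - n) * ∫⁻ y in R.set, Q.set.indicator (f · ^ p) y
      ≤ V ^ (1 / (n / α) - 1) * ((∫⁻ y in R.set, f y ^ q) ^ (1 / q) * B ^ (1 / q')) := by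
        rw [R.ofReal_side_rpow_sub hn, one_div_div]
        gcongr
        exact lintegral_indicator_rpow_le_holder hf.aemeasurable Q.measurableSet hqr hp
    _ = V ^ (1 / (n / α)) * ((∫⁻ y in R.set, f y ^ q) / V) ^ (1 / q) *
          (V ^ (-1 : ℝ) * B) ^ (1 / q') :=
        ENNReal.rpow_sub_one_mul_holder hV₀ hV hqr _ _ _
    _ ≤ _ := by
        rw [one_div_div q]
        gcongr
        · exact le_iSup_of_le R le_rfl
        · exact div_nonneg (by linarith) (by linarith)

/-- pointwise bound
`M_α[|f|^p 1_Q](x) ≤ ‖f‖_{M^{q,n/α}} (M[|f|^{(p-1)q'} 1_Q](x))^{1/q'}`. -/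
theorem fracMax_pointwise_bound (n : ℕ) (α p q : ℝ) (hα0 : 0 < α) (hαn : α < n)
    (hp : 1 < p) (hpq : p < q) (hq : q ≤ n / α)
    (f : (Fin n → ℝ) → ℝ≥0∞) (hf : Measurable f) (Q : Cube n) (x : Fin n → ℝ) :
    fracMax α (Q.set.indicator fun y => f y ^ p) x ≤
      morreyNorm q (n / α) f *
        fracMax 0 (Q.set.indicator fun y => f y ^ ((p - 1) * (q / (q - 1)))) x
          ^ ((q - 1) / q) :=
  fracMax_pointwise_bound_general n α p q hα0 hαn hp hpq f hf Q x
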